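/- arXiv:1208.1412 — 2 statements merged into one kernel-verified Lean document; each statement's English description precedes it below -/
import Mathlib

section
/- Let p be a prime with p ≡ 1 (mod 48). Then p is representable by x²+64y² if and only if p is representable by x²+288y². Let p be a prime with p ≡ 25 (mod 48). Then p is representable by exactly one of the quadratic forms x²+64y² and x²+288y². -/
/-!
Write `p = a² + b²` with `a` odd, `b = 4B`, and `p = c² + 2d²` with `c` odd, `d = 2D`. These
representations are unique up to sign, so `p = x² + 64y²` iff `B` is even and, since `3 ∣ d`
when `p ≡ 1 mod 3`, `p = x² + 288y²` iff `D` is even. It remains to show that `(p-1)/8 + B + D`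
is even. In `𝔽_p`, `(a + b)² = 2ab`, `a² = -b²` and `c² = -2d²`; as `b` and `d` are quadratic
residues (`p` is a square modulo each of them), Euler's criterion turns this into
`(a + b | p) = (-1)^((p-1)/8) (c | p)`. Quadratic reciprocity evaluates the two symbols as
`χ₈(a + b) = (-1)^((p-1)/8 + B)` and `χ₈(c) = (-1)^((p-1)/8 + D)`.
-/
open scoped NumberTheorySymbols

/-- `(a² + n b²)(x² + n y²) = (a x + n b y)² + n (a y - b x)²`, and `p ∣ a y - b x` forces
one of the two squares on the right to vanish. -/
theorem sq_eq_sq_or_sq_eq_mul_sq_of_dvd_sub {p a b x y n : ℤ} (hp : p ≠ 0) (hn : 0 < n)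
    (h₁ : p = a ^ 2 + n * b ^ 2) (h₂ : p = x ^ 2 + n * y ^ 2) (hdvd : p ∣ a * y - b * x) :
    y ^ 2 = b ^ 2 ∨ x ^ 2 = n * b ^ 2 := by
  obtain ⟨j, hj⟩ := hdvd
  have hsq : p ^ 2 = (a * x + n * b * y) ^ 2 + n * (a * y - b * x) ^ 2 := by
    linear_combination p * h₂ + (x ^ 2 + n * y ^ 2) * h₁
  rw [hj] at hsq
  rcases eq_or_ne j 0 with rfl | hj0
  · left
    have hay : a * y = b * x := by linarith
    apply mul_left_cancel₀ hp
    linear_combination y ^ 2 * h₁ - b ^ 2 * h₂ + (a * y + b * x) * hay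
  · right
    have hj2 : 0 < j ^ 2 := by positivity
    have hnj : 1 ≤ n * j ^ 2 := one_le_mul_of_one_le_of_one_le hn hj2
    have hzero : (a * x + n * b * y) ^ 2 = 0 := by nlinarith [sq_nonneg (a * x + n * b * y)]
    have hax : a * x = -(n * b * y) := by linear_combination pow_eq_zero_iff two_ne_zero |>.mp hzero
    apply mul_left_cancel₀ hp
    linear_combination x ^ 2 * h₁ - n * b ^ 2 * h₂ + (a * x - n * b * y) * hax

theorem Prime.sq_eq_sq_or_sq_eq_mul_sq {p a b x y n : ℤ} (hp : Prime p) (hn : 0 < n)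
    (h₁ : p = a ^ 2 + n * b ^ 2) (h₂ : p = x ^ 2 + n * y ^ 2) :
    y ^ 2 = b ^ 2 ∨ x ^ 2 = n * b ^ 2 := by
  have hdvd : p ∣ (a * y - b * x) * (a * y + b * x) :=
    ⟨y ^ 2 - b ^ 2, by linear_combination -y ^ 2 * h₁ + b ^ 2 * h₂⟩
  rcases hp.dvd_or_dvd hdvd with h | h
  · exact sq_eq_sq_or_sq_eq_mul_sq_of_dvd_sub hp.ne_zero hn h₁ h₂ h
  · simpa using sq_eq_sq_or_sq_eq_mul_sq_of_dvd_sub (b := -b) hp.ne_zero hn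
      (by simpa using h₁) h₂ (by simpa using h)

theorem Prime.exists_sq_add_mul_sq_iff_dvd {p a b n m : ℤ} (hp : Prime p) (hn : 0 < n)
    (ha : Odd a) (hnm : Even (n * m)) (h : p = a ^ 2 + n * b ^ 2) :
    (∃ x y : ℤ, p = x ^ 2 + n * m ^ 2 * y ^ 2) ↔ m ∣ b := by
  constructor
  · rintro ⟨x, y, hxy⟩
    rcases hp.sq_eq_sq_or_sq_eq_mul_sq hn h (x := x) (y := m * y) (by rw [hxy]; ring) with h' | h'
    · exact (Int.pow_dvd_pow_iff two_ne_zero).mp ⟨y ^ 2, by rw [← h']; ring⟩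
    · have ha2 : a ^ 2 = n * m * (m * y ^ 2) := by linear_combination -h + hxy + h'
      exact absurd (hnm.mul_right (m * y ^ 2))
        (by rw [← ha2]; exact Int.not_even_iff_odd.mpr ha.pow)
  · rintro ⟨y, rfl⟩
    exact ⟨a, y, by rw [h]; ring⟩

/-- Thue's lemma, by pigeonhole on `u - s * v` for `0 ≤ u, v ≤ √n`. -/
theorem ZMod.exists_abs_le_sqrt_intCast_eq_mul {n : ℕ} [NeZero n] (s : ZMod n) :
    ∃ x y : ℤ, (x ≠ 0 ∨ y ≠ 0) ∧ |x| ≤ n.sqrt ∧ |y| ≤ n.sqrt ∧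
      (x : ZMod n) = s * y := by
  have hcard : Fintype.card (ZMod n) < Fintype.card (Fin (n.sqrt + 1) × Fin (n.sqrt + 1)) := by
    simpa [ZMod.card, ← sq] using Nat.lt_succ_sqrt' n
  obtain ⟨⟨u, v⟩, ⟨u', v'⟩, hne, heq⟩ := Fintype.exists_ne_map_eq_of_card_lt
    (fun uv ↦ ((uv.1 : ℕ) : ZMod n) - s * (uv.2 : ℕ)) hcard
  refine ⟨(u : ℤ) - u', (v : ℤ) - v', ?_, ?_, ?_, ?_⟩
  · by_contra! h
    exact hne (Prod.ext (Fin.ext (by dsimp; omega)) (Fin.ext (by dsimp; omega)))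
  · have := u.isLt; have := u'.isLt; exact abs_le.mpr ⟨by omega, by omega⟩
  · have := v.isLt; have := v'.isLt; exact abs_le.mpr ⟨by omega, by omega⟩
  · push_cast
    linear_combination heq

theorem Nat.Prime.sq_add_two_sq {p : ℕ} [Fact p.Prime] (hp : p % 8 = 1 ∨ p % 8 = 3) :
    ∃ a b : ℕ, a ^ 2 + 2 * b ^ 2 = p := by
  have hp' := (Fact.out : p.Prime)
  obtain ⟨s, hs⟩ := (ZMod.exists_sq_eq_neg_two_iff (by omega)).mpr hp
  obtain ⟨x, y, hxy0, hx, hy, hxy⟩ := ZMod.exists_abs_le_sqrt_intCast_eq_mul s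
  obtain ⟨t, ht⟩ : (p : ℤ) ∣ x ^ 2 + 2 * y ^ 2 := by
    rw [← ZMod.intCast_zmod_eq_zero_iff_dvd]
    push_cast
    linear_combination (-y ^ 2) * hs + (x + s * y) * hxy
  have hsqrt : (p.sqrt : ℤ) ^ 2 < p := by
    have hne : p.sqrt ^ 2 ≠ p := fun h ↦
      (Nat.prime_iff.mp hp').not_isSquare ⟨p.sqrt, by rw [← sq, h]⟩
    exact_mod_cast lt_of_le_of_ne (Nat.sqrt_le' p) hne
  have hx2 : x ^ 2 ≤ (p.sqrt : ℤ) ^ 2 := sq_le_sq' (abs_le.mp hx).1 (abs_le.mp hx).2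
  have hy2 : y ^ 2 ≤ (p.sqrt : ℤ) ^ 2 := sq_le_sq' (abs_le.mp hy).1 (abs_le.mp hy).2
  have hpos : 0 < x ^ 2 + 2 * y ^ 2 := by
    rcases hxy0 with h | h <;> positivity
  have hp0 : (0 : ℤ) < p := by exact_mod_cast hp'.pos
  have ht0 : 0 < t := by nlinarith
  have ht3 : t < 3 := by nlinarith
  interval_cases t
  · exact ⟨x.natAbs, y.natAbs, by zify; simp only [sq_abs]; linarith⟩
  · obtain ⟨z, rfl⟩ : Even x := by
      rw [← Int.even_pow' two_ne_zero]; exact ⟨p - y ^ 2, by linarith⟩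
    exact ⟨y.natAbs, z.natAbs, by zify; simp only [sq_abs]; linarith⟩

theorem Nat.Prime.exists_odd_sq_add_sq_four_mul {p : ℕ} [Fact p.Prime] (hp : p % 8 = 1) :
    ∃ a B : ℕ, Odd a ∧ p = a ^ 2 + (4 * B) ^ 2 := by
  obtain ⟨a, b, hab⟩ := Nat.Prime.sq_add_sq (p := p) (by omega)
  wlog ha : Odd a generalizing a b
  · have hodd : Odd (a ^ 2 + b ^ 2) := by rw [hab, Nat.odd_iff]; omega
    rw [Nat.odd_add, Nat.odd_pow_iff two_ne_zero, Nat.even_pow' two_ne_zero] at hodd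
    exact this b a (by rw [← hab, add_comm]) (Nat.not_even_iff_odd.mp (ha ∘ hodd.mpr))
  have h8 : b ^ 2 % 8 = 0 := by
    have := Nat.eight_dvd_sq_sub_one_of_odd ha
    have := pow_pos ha.pos 2
    omega
  have h4 : b % 4 = 0 := by
    rw [Nat.pow_mod] at h8
    have := Nat.mod_lt b (show 8 > 0 by norm_num)
    interval_cases hb : b % 8 <;> omega
  exact ⟨a, b / 4, ha, by rw [← hab, Nat.mul_div_cancel' (Nat.dvd_of_mod_eq_zero h4)]⟩

theorem Nat.Prime.exists_odd_sq_add_two_mul_sq_two_mul {p : ℕ} [Fact p.Prime] (hp : p % 8 = 1) :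
    ∃ c D : ℕ, Odd c ∧ p = c ^ 2 + 2 * (2 * D) ^ 2 := by
  obtain ⟨c, d, hcd⟩ := Nat.Prime.sq_add_two_sq (p := p) (Or.inl hp)
  have hc : Odd c := by
    have : Odd (c ^ 2 + 2 * d ^ 2) := by rw [hcd, Nat.odd_iff]; omega
    simpa [Nat.odd_add, Nat.odd_pow_iff two_ne_zero, Nat.odd_mul] using this
  have hd : Even (d ^ 2) := by
    have := Nat.eight_dvd_sq_sub_one_of_odd hc
    have := pow_pos hc.pos 2
    rw [Nat.even_iff]; omega
  obtain ⟨D, rfl⟩ := (Nat.even_pow' two_ne_zero).mp hd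
  exact ⟨c, D, hc, by rw [← hcd]; ring⟩

theorem three_dvd_of_eq_sq_add_two_mul_sq {p c d : ℕ} (hp : p % 3 = 1)
    (h : p = c ^ 2 + 2 * d ^ 2) : 3 ∣ d := by
  have h3 : (c : ZMod 3) ^ 2 + 2 * (d : ZMod 3) ^ 2 = 1 := by
    have := congrArg (Nat.cast : ℕ → ZMod 3) h
    push_cast at this
    rw [← this, ← ZMod.natCast_mod, hp, Nat.cast_one]
  rw [← ZMod.natCast_eq_zero_iff]
  generalize (c : ZMod 3) = x at h3
  generalize (d : ZMod 3) = y at h3 ⊢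
  revert x y; decide

theorem Nat.Prime.coprime_of_eq_sq_add_mul_sq {p a b n : ℕ} (hp : p.Prime)
    (h : p = a ^ 2 + n * b ^ 2) : a.Coprime b := by
  have hdvd : a.gcd b * a.gcd b ∣ p := by
    rw [h, ← sq]
    exact dvd_add (pow_dvd_pow_of_dvd (a.gcd_dvd_left b) 2)
      (Dvd.dvd.mul_left (pow_dvd_pow_of_dvd (a.gcd_dvd_right b) 2) n)
  exact Nat.isUnit_iff.mp (hp.prime.squarefree _ hdvd)

theorem Nat.Prime.ne_zero_of_eq_sq_add_mul_sq {p a b n : ℕ} (hp : p.Prime)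
    (h : p = a ^ 2 + n * b ^ 2) : b ≠ 0 := by
  rintro rfl
  exact (Nat.prime_iff.mp hp).not_isSquare
    ⟨a, by rw [h, zero_pow two_ne_zero, mul_zero, add_zero, sq]⟩

theorem jacobiSym_eq_of_modEq_mul_sq {p n : ℕ} {s t : ℤ} (hp : p % 4 = 1) (hn : Odd n)
    (hs : IsCoprime s n) (h : (p : ℤ) ≡ t * s ^ 2 [ZMOD n]) : J(n | p) = J(t | n) := by
  rw [jacobiSym.quadratic_reciprocity_one_mod_four' hn hp, jacobiSym.mod_left' h,
    jacobiSym.mul_left, jacobiSym.sq_one' (Int.isCoprime_iff_gcd_eq_one.mp hs), mul_one]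

theorem jacobiSym_eq_one_of_modEq_sq {p m : ℕ} {s : ℤ} (hp : p % 8 = 1) (hm : m ≠ 0)
    (hs : IsCoprime s m) (h : (p : ℤ) ≡ s ^ 2 [ZMOD m]) : J(m | p) = 1 := by
  obtain ⟨e, u, hu, rfl⟩ := Nat.exists_eq_two_pow_mul_odd hm
  push_cast at hs h ⊢
  have hJu : J(u | p) = 1 := by
    rw [jacobiSym_eq_of_modEq_mul_sq (t := 1) (by omega) hu hs.of_mul_right_right
      (by simpa using h.of_mul_left _), jacobiSym.one_left]
  have hp2 : p % 2 = 1 := by omega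
  have hJ2 : J(2 | p) = 1 := by
    rw [jacobiSym.at_two (Nat.odd_iff.mpr hp2), ZMod.χ₈_nat_eq_if_mod_eight]
    simp [hp, hp2]
  rw [jacobiSym.mul_left, jacobiSym.pow_left, hJ2, hJu, one_pow, one_mul]

theorem ZMod.χ₈_nat_eq_neg_one_pow {n : ℕ} (hn : Odd n) : χ₈ n = (-1) ^ (n ^ 2 / 8) := by
  rw [Nat.odd_iff] at hn
  have h16 : n ^ 2 / 8 % 2 = (n % 16) ^ 2 % 16 / 8 := by rw [← Nat.pow_mod]; omega
  have h8 : n % 8 = n % 16 % 8 := by omega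
  have h2 : n % 16 % 2 = 1 := by omega
  rw [χ₈_nat_eq_if_mod_eight, if_neg (by omega), neg_one_pow_eq_pow_mod_two, h16, h8]
  have := Nat.mod_lt n (show 16 > 0 by norm_num)
  interval_cases n % 16 <;> simp_all

theorem jacobiSym_eq_neg_one_pow_of_modEq_two_mul_sq {p n : ℕ} {s : ℤ} (hp : p % 4 = 1)
    (hn : Odd n) (hs : IsCoprime s n) (h : (p : ℤ) ≡ 2 * s ^ 2 [ZMOD n]) :
    J(n | p) = (-1) ^ (n ^ 2 / 8) := by
  rw [jacobiSym_eq_of_modEq_mul_sq hp hn hs h, jacobiSym.at_two hn,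
    ZMod.χ₈_nat_eq_neg_one_pow hn]

theorem jacobiSym_add_eq_neg_one_pow {p a b : ℕ} (hp : p % 4 = 1) (hab : p = a ^ 2 + b ^ 2)
    (hodd : Odd (a + b)) (hcop : a.Coprime b) : J(a + b | p) = (-1) ^ ((a + b) ^ 2 / 8) := by
  have hpZ : (p : ℤ) = a ^ 2 + b ^ 2 := by exact_mod_cast hab
  have := jacobiSym_eq_neg_one_pow_of_modEq_two_mul_sq (s := a) hp hodd
    (Nat.isCoprime_iff_coprime.mpr (Nat.coprime_self_add_right.mpr hcop))
    (Int.modEq_iff_dvd.mpr ⟨a - b, by push_cast; linear_combination -hpZ⟩)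
  exact_mod_cast this

theorem jacobiSym_eq_neg_one_pow_of_eq_sq_add_two_mul_sq {p c d : ℕ} (hp : p % 4 = 1)
    (hcd : p = c ^ 2 + 2 * d ^ 2) (hc : Odd c) (hcop : c.Coprime d) :
    J(c | p) = (-1) ^ (c ^ 2 / 8) := by
  have hpZ : (p : ℤ) = c ^ 2 + 2 * d ^ 2 := by exact_mod_cast hcd
  exact jacobiSym_eq_neg_one_pow_of_modEq_two_mul_sq (s := d) hp hc
    (Nat.isCoprime_iff_coprime.mpr hcop.symm)
    (Int.modEq_iff_dvd.mpr ⟨-c, by linear_combination -hpZ⟩)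

theorem jacobiSym_eq_one_of_eq_sq_add_mul_sq {p a b n : ℕ} (hp : p % 8 = 1)
    (h : p = a ^ 2 + n * b ^ 2) (hb : b ≠ 0) (hcop : a.Coprime b) : J(b | p) = 1 := by
  have hpZ : (p : ℤ) = a ^ 2 + n * b ^ 2 := by exact_mod_cast h
  exact jacobiSym_eq_one_of_modEq_sq (s := a) hp hb (Nat.isCoprime_iff_coprime.mpr hcop)
    (Int.modEq_iff_dvd.mpr ⟨-(n * b), by linear_combination -hpZ⟩)

theorem pow_div_two_eq_of_jacobiSym_eq {p : ℕ} [Fact p.Prime] {x v : ℤ} (h : J(x | p) = v) :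
    (x : ZMod p) ^ (p / 2) = v := by
  rw [← legendreSym.eq_pow, jacobiSym.legendreSym.to_jacobiSym, h]

theorem add_pow_four_mul_eq {R : Type*} [CommRing R] {a b c d : R} {k : ℕ}
    (hab : a ^ 2 + b ^ 2 = 0) (hcd : c ^ 2 + 2 * d ^ 2 = 0) (hb : b ^ (4 * k) = 1)
    (hd : d ^ (4 * k) = 1) : (a + b) ^ (4 * k) = (-1) ^ k * c ^ (4 * k) := by
  have h4k (x : R) : x ^ (4 * k) = ((x ^ 2) ^ 2) ^ k := by rw [← pow_mul, ← pow_mul]; ring_nf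
  have hsum : ((a + b) ^ 2) ^ 2 = -1 * (4 * (b ^ 2) ^ 2) := by
    linear_combination (a ^ 2 + 4 * a * b + 5 * b ^ 2) * hab
  have hc : (c ^ 2) ^ 2 = 4 * (d ^ 2) ^ 2 := by linear_combination (c ^ 2 - 2 * d ^ 2) * hcd
  rw [h4k, hsum, mul_pow, h4k c, hc, mul_pow, mul_pow, ← h4k, ← h4k, hb, hd]

theorem even_add_div_eight_add_of_jacobiSym_eq {p : ℕ} [Fact p.Prime] (hp : p % 8 = 1)
    {a b c d : ℤ} {m n : ℕ} (hab : (p : ℤ) ∣ a ^ 2 + b ^ 2)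
    (hcd : (p : ℤ) ∣ c ^ 2 + 2 * d ^ 2) (hJab : J(a + b | p) = (-1) ^ m)
    (hJc : J(c | p) = (-1) ^ n) (hJb : J(b | p) = 1) (hJd : J(d | p) = 1) :
    Even (m + p / 8 + n) := by
  have : Fact (2 < p) := ⟨by have := (Fact.out : p.Prime).two_le; omega⟩
  rw [← ZMod.intCast_zmod_eq_zero_iff_dvd] at hab hcd
  push_cast at hab hcd
  have hsum := pow_div_two_eq_of_jacobiSym_eq hJab
  have hc := pow_div_two_eq_of_jacobiSym_eq hJc
  have hb := pow_div_two_eq_of_jacobiSym_eq hJb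
  have hd := pow_div_two_eq_of_jacobiSym_eq hJd
  rw [show p / 2 = 4 * (p / 8) by omega] at hsum hc hb hd
  push_cast at hsum hc hb hd
  have key := add_pow_four_mul_eq hab hcd hb hd
  rw [hsum, hc, ← pow_add] at key
  rw [← neg_one_pow_eq_one_iff_even (ZMod.neg_one_ne_one (n := p)), add_assoc, pow_add, key,
    ← pow_add, ← two_mul, pow_mul, neg_one_sq, one_pow]

theorem Nat.Prime.even_div_eight_add_add {p a B c D : ℕ} (hp : p.Prime) (ha : Odd a)
    (hc : Odd c) (hab : p = a ^ 2 + (4 * B) ^ 2) (hcd : p = c ^ 2 + 2 * (2 * D) ^ 2) :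
    Even (p / 8 + B + D) := by
  have := Fact.mk hp
  have hp8 : p % 8 = 1 := by
    have := Nat.eight_dvd_sq_sub_one_of_odd ha
    have : 0 < a ^ 2 := pow_pos ha.pos 2
    have : (4 * B) ^ 2 = 8 * (2 * B ^ 2) := by ring
    omega
  have hab' : a.Coprime (4 * B) := hp.coprime_of_eq_sq_add_mul_sq (n := 1) (by rw [hab, one_mul])
  have hcd' : c.Coprime (2 * D) := hp.coprime_of_eq_sq_add_mul_sq hcd
  have hB : 4 * B ≠ 0 := hp.ne_zero_of_eq_sq_add_mul_sq (n := 1) (by rw [hab, one_mul])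
  have hD : 2 * D ≠ 0 := hp.ne_zero_of_eq_sq_add_mul_sq hcd
  have hpar := even_add_div_eight_add_of_jacobiSym_eq hp8
    ⟨1, by push_cast [hab]; ring⟩ ⟨1, by push_cast [hcd]; ring⟩
    (jacobiSym_add_eq_neg_one_pow (by omega) hab (ha.add_even ⟨2 * B, by ring⟩) hab')
    (jacobiSym_eq_neg_one_pow_of_eq_sq_add_two_mul_sq (by omega) hcd hc hcd')
    (jacobiSym_eq_one_of_eq_sq_add_mul_sq (n := 1) hp8 (by rw [hab, one_mul]) hB hab')
    (jacobiSym_eq_one_of_eq_sq_add_mul_sq hp8 hcd hD hcd')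
  have hsum : (a + 4 * B) ^ 2 = p + 8 * (a * B) := by rw [hab]; ring
  have hc8 : c ^ 2 + 8 * D ^ 2 = p := by rw [hcd]; ring
  have haB : a * B % 2 = B % 2 := by rw [Nat.mul_mod, Nat.odd_iff.mp ha, one_mul, Nat.mod_mod]
  have hD2 : D ^ 2 % 2 = D % 2 := by
    rw [Nat.pow_mod]; rcases Nat.mod_two_eq_zero_or_one D with h | h <;> simp [h]
  rw [Nat.even_iff] at hpar ⊢
  omega

theorem Nat.Prime.even_div_eight_iff {p : ℕ} (hp : p.Prime) (h8 : p % 8 = 1) (h3 : p % 3 = 1) :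
    Even (p / 8) ↔ ((∃ x y : ℤ, (p : ℤ) = x ^ 2 + 64 * y ^ 2) ↔
      (∃ x y : ℤ, (p : ℤ) = x ^ 2 + 288 * y ^ 2)) := by
  have := Fact.mk hp
  obtain ⟨a, B, ha, hab⟩ := Nat.Prime.exists_odd_sq_add_sq_four_mul h8
  obtain ⟨c, D, hc, hcd⟩ := Nat.Prime.exists_odd_sq_add_two_mul_sq_two_mul h8
  have hpZ := Nat.prime_iff_prime_int.mp hp
  have h64 : (∃ x y : ℤ, (p : ℤ) = x ^ 2 + 64 * y ^ 2) ↔ Even B := by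
    have := hpZ.exists_sq_add_mul_sq_iff_dvd (a := a) (b := 4 * B) (n := 1) (m := 8) one_pos
      (by exact_mod_cast ha) (by decide) (by rw [hab]; push_cast; ring)
    norm_num at this
    rw [this, Nat.even_iff]
    omega
  have h288 : (∃ x y : ℤ, (p : ℤ) = x ^ 2 + 288 * y ^ 2) ↔ Even D := by
    have h3D := three_dvd_of_eq_sq_add_two_mul_sq h3 hcd
    have := hpZ.exists_sq_add_mul_sq_iff_dvd (a := c) (b := 2 * D) (n := 2) (m := 12) two_pos
      (by exact_mod_cast hc) (by decide) (by rw [hcd]; push_cast; ring)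
    norm_num at this
    rw [this, Nat.even_iff]
    omega
  rw [h64, h288]
  have := hp.even_div_eight_add_add ha hc hab hcd
  simp only [Nat.even_add] at this
  tauto

theorem kaplansky_like_4 (p : ℕ) (hp : p.Prime) :
    (p % 48 = 1 → ((∃ x y : ℤ, (p : ℤ) = x ^ 2 + 64 * y ^ 2) ↔
      (∃ x y : ℤ, (p : ℤ) = x ^ 2 + 288 * y ^ 2))) ∧
    (p % 48 = 25 → Xor' (∃ x y : ℤ, (p : ℤ) = x ^ 2 + 64 * y ^ 2)
      (∃ x y : ℤ, (p : ℤ) = x ^ 2 + 288 * y ^ 2)) := by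
  refine ⟨fun h48 ↦ ?_, fun h48 ↦ ?_⟩
  · exact (hp.even_div_eight_iff (by omega) (by omega)).mp (Nat.even_iff.mpr (by omega))
  · refine (xor_iff_not_iff _ _).mpr fun h ↦ ?_
    have := (hp.even_div_eight_iff (by omega) (by omega)).mpr h
    rw [Nat.even_iff] at this
    omega
end

section
/- Let q be a complex number with 0 < |q| < 1. Then J̄_{1,3}·j(q;−q³) = J_{6,12}·J̄_{2,6}. -/
/-!
Splitting each product of base `±q³` into its even and odd halves of base `q⁶` and pairing
`(a;q⁶)_∞ (-a;q⁶)_∞ = (a²;q¹²)_∞` turns the left side into `J_{2,12} J̄_{4,6}² (q⁶;q¹²)_∞ / J₁₂`,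
and `J̄_{4,6} = J̄_{2,6}` by `j(x;t) = j(t/x;t)`. Since `J_{6,12} = (q⁶;q¹²)_∞² J₁₂`, what remains
is `J_{2,12} J̄_{2,6} = (q⁶;q¹²)_∞ J₁₂²`, which is Euler's `(-a;t)_∞ (a;t)_∞ = (a²;t²)_∞` at
`a = q², q⁴` and `t = q⁶`.
-/

open Complex

/-- The infinite q-Pochhammer symbol `(x;q)_∞ = ∏_{i ≥ 0} (1 - qⁱ x)`. -/
noncomputable def qPochInf (x q : ℂ) : ℂ := ∏' i : ℕ, (1 - q ^ i * x)

/-- The theta function `j(x;q) = (x;q)_∞ (q/x;q)_∞ (q;q)_∞`. -/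
noncomputable def jTheta (x q : ℂ) : ℂ :=
  qPochInf x q * qPochInf (q / x) q * qPochInf q q

lemma norm_pow_lt_one {x : ℂ} (hx : ‖x‖ < 1) {n : ℕ} (hn : n ≠ 0) : ‖x ^ n‖ < 1 := by
  simpa using pow_lt_one₀ (norm_nonneg x) hx hn

section QPochhammer

variable {t : ℂ}

lemma summable_norm_pow_mul (ht : ‖t‖ < 1) (x : ℂ) : Summable fun i : ℕ ↦ ‖t ^ i * x‖ := by
  simpa [norm_mul, norm_pow] using
    (summable_geometric_of_lt_one (norm_nonneg t) ht).mul_right ‖x‖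

lemma multipliable_one_sub_pow_mul (ht : ‖t‖ < 1) (x : ℂ) :
    Multipliable fun i : ℕ ↦ 1 - t ^ i * x := by
  simpa [sub_eq_add_neg] using
    Complex.multipliable_one_add_of_summable (summable_norm_pow_mul ht x).of_norm.neg

lemma qPochInf_ne_zero (ht : ‖t‖ < 1) {x : ℂ} (hx : ‖x‖ < 1) : qPochInf x t ≠ 0 := by
  have hterm (i : ℕ) : 1 + -(t ^ i * x) ≠ 0 := by
    have hlt : ‖t ^ i * x‖ < 1 := by
      rw [norm_mul, norm_pow]
      exact mul_lt_one_of_nonneg_of_lt_one_right (pow_le_one₀ (norm_nonneg t) ht.le)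
        (norm_nonneg x) hx
    rw [← sub_eq_add_neg, sub_ne_zero]
    exact fun h ↦ by simp [← h] at hlt
  simpa [qPochInf, sub_eq_add_neg] using
    tprod_one_add_ne_zero_of_summable hterm (by simpa using summable_norm_pow_mul ht x)

lemma qPochInf_mul_qPochInf_neg (ht : ‖t‖ < 1) (x : ℂ) :
    qPochInf x t * qPochInf (-x) t = qPochInf (x ^ 2) (t ^ 2) := by
  rw [qPochInf, qPochInf, qPochInf, ← (multipliable_one_sub_pow_mul ht x).tprod_mul
    (multipliable_one_sub_pow_mul ht (-x))]
  exact tprod_congr fun i ↦ by ring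

lemma qPochInf_eq_mul_sq_base (ht : ‖t‖ < 1) (x : ℂ) :
    qPochInf x t = qPochInf x (t ^ 2) * qPochInf (t * x) (t ^ 2) := by
  have ht2 := norm_pow_lt_one ht two_ne_zero
  rw [qPochInf, qPochInf, qPochInf, ← tprod_even_mul_odd]
  · congr 1 <;> exact tprod_congr fun i ↦ by ring
  · exact (multipliable_one_sub_pow_mul ht2 x).congr fun k ↦ by ring
  · exact (multipliable_one_sub_pow_mul ht2 (t * x)).congr fun k ↦ by ring

lemma qPochInf_euler_mod_three {x : ℂ} (hx : ‖x‖ < 1) :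
    qPochInf (-x) (x ^ 3) * qPochInf (-(x ^ 2)) (x ^ 3) * qPochInf x (x ^ 6) *
      qPochInf (x ^ 5) (x ^ 6) = 1 := by
  have hx3 := norm_pow_lt_one hx three_ne_zero
  have h1 : qPochInf x (x ^ 3) * qPochInf (-x) (x ^ 3) = qPochInf (x ^ 2) (x ^ 6) := by
    convert qPochInf_mul_qPochInf_neg hx3 x using 2; ring
  have h2 :
      qPochInf (x ^ 2) (x ^ 3) * qPochInf (-(x ^ 2)) (x ^ 3) = qPochInf (x ^ 4) (x ^ 6) := by
    convert qPochInf_mul_qPochInf_neg hx3 (x ^ 2) using 2 <;> ring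
  have s1 : qPochInf x (x ^ 3) = qPochInf x (x ^ 6) * qPochInf (x ^ 4) (x ^ 6) := by
    convert qPochInf_eq_mul_sq_base hx3 x using 3 <;> ring
  have s2 : qPochInf (x ^ 2) (x ^ 3) = qPochInf (x ^ 2) (x ^ 6) * qPochInf (x ^ 5) (x ^ 6) := by
    convert qPochInf_eq_mul_sq_base hx3 (x ^ 2) using 3 <;> ring
  have hx6 := norm_pow_lt_one hx (n := 6) (by norm_num)
  refine mul_right_cancel₀ (mul_ne_zero (qPochInf_ne_zero hx6 (norm_pow_lt_one hx two_ne_zero))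
    (qPochInf_ne_zero hx6 (norm_pow_lt_one hx four_ne_zero))) ?_
  linear_combination qPochInf (-(x ^ 2)) (x ^ 3) * qPochInf (x ^ 2) (x ^ 3) * h1 +
    qPochInf (x ^ 2) (x ^ 6) * h2 -
    qPochInf (-x) (x ^ 3) * qPochInf (-(x ^ 2)) (x ^ 3) * qPochInf (x ^ 2) (x ^ 6) *
      qPochInf (x ^ 5) (x ^ 6) * s1 -
    qPochInf (-x) (x ^ 3) * qPochInf (-(x ^ 2)) (x ^ 3) * qPochInf x (x ^ 3) * s2

end QPochhammer

section JacobiTheta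

variable {t x : ℂ}

lemma jTheta_div_left (ht0 : t ≠ 0) : jTheta (t / x) t = jTheta x t := by
  rw [jTheta, jTheta, div_div_cancel₀ ht0]
  ring

lemma jTheta_neg_mul_jTheta_neg_base (ht : ‖t‖ < 1) (ht0 : t ≠ 0) :
    jTheta (-x) t * jTheta x (-t) * qPochInf (t ^ 4) (t ^ 4) =
      jTheta (x ^ 2) (t ^ 4) * jTheta (-(t * x)) (t ^ 2) ^ 2 * qPochInf (t ^ 2) (t ^ 4) := by
  have ht' : ‖-t‖ < 1 := by rwa [norm_neg]
  have ht2 := norm_pow_lt_one ht two_ne_zero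
  have hdiv : t ^ 2 / -(t * x) = -(t / x) := by field_simp
  have s1 : qPochInf (-x) t = qPochInf (-x) (t ^ 2) * qPochInf (-(t * x)) (t ^ 2) := by
    convert qPochInf_eq_mul_sq_base ht (-x) using 3; ring
  have s2 : qPochInf (-(t / x)) t =
      qPochInf (-(t / x)) (t ^ 2) * qPochInf (-(t ^ 2 / x)) (t ^ 2) := by
    convert qPochInf_eq_mul_sq_base ht (-(t / x)) using 3; ring
  have s3 : qPochInf t t = qPochInf t (t ^ 2) * qPochInf (t ^ 2) (t ^ 2) := by
    convert qPochInf_eq_mul_sq_base ht t using 3; ring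
  have s4 : qPochInf x (-t) = qPochInf x (t ^ 2) * qPochInf (-(t * x)) (t ^ 2) := by
    convert qPochInf_eq_mul_sq_base ht' x using 3 <;> ring
  have s5 : qPochInf (-(t / x)) (-t) =
      qPochInf (-(t / x)) (t ^ 2) * qPochInf (t ^ 2 / x) (t ^ 2) := by
    convert qPochInf_eq_mul_sq_base ht' (-(t / x)) using 3 <;> ring
  have s6 : qPochInf (-t) (-t) = qPochInf (-t) (t ^ 2) * qPochInf (t ^ 2) (t ^ 2) := by
    convert qPochInf_eq_mul_sq_base ht' (-t) using 3 <;> ring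
  have m1 : qPochInf x (t ^ 2) * qPochInf (-x) (t ^ 2) = qPochInf (x ^ 2) (t ^ 4) := by
    convert qPochInf_mul_qPochInf_neg ht2 x using 2; ring
  have m2 : qPochInf (t ^ 2 / x) (t ^ 2) * qPochInf (-(t ^ 2 / x)) (t ^ 2) =
      qPochInf (t ^ 4 / x ^ 2) (t ^ 4) := by
    convert qPochInf_mul_qPochInf_neg ht2 (t ^ 2 / x) using 2 <;> ring
  have m3 : qPochInf t (t ^ 2) * qPochInf (-t) (t ^ 2) = qPochInf (t ^ 2) (t ^ 4) := by
    convert qPochInf_mul_qPochInf_neg ht2 t using 2; ring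
  simp only [jTheta]
  rw [div_neg, neg_div, hdiv, s1, s2, s3, s4, s5, s6, ← m1, ← m2, ← m3]
  ring

lemma jTheta_mul_jTheta_neg_pow_three (hx : ‖x‖ < 1) (hx0 : x ≠ 0) :
    jTheta x (x ^ 6) * jTheta (-x) (x ^ 3) =
      qPochInf (x ^ 3) (x ^ 6) * qPochInf (x ^ 6) (x ^ 6) ^ 2 := by
  have split :
      qPochInf (x ^ 3) (x ^ 3) = qPochInf (x ^ 3) (x ^ 6) * qPochInf (x ^ 6) (x ^ 6) := by
    convert qPochInf_eq_mul_sq_base (norm_pow_lt_one hx three_ne_zero) (x ^ 3) using 3 <;> ring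
  simp only [jTheta]
  rw [show x ^ 6 / x = x ^ 5 by field_simp, show x ^ 3 / -x = -(x ^ 2) by field_simp, split]
  linear_combination
    qPochInf (x ^ 3) (x ^ 6) * qPochInf (x ^ 6) (x ^ 6) ^ 2 * qPochInf_euler_mod_three hx

end JacobiTheta

theorem threefield_id_three (q : ℂ) (hq0 : 0 < ‖q‖) (hq1 : ‖q‖ < 1) :
    jTheta (-q) (q ^ 3) * jTheta q (-(q ^ 3)) =
      jTheta (q ^ 6) (q ^ 12) * jTheta (-(q ^ 2)) (q ^ 6) := by
  have hq : q ≠ 0 := norm_pos_iff.mp hq0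
  have hLHS : jTheta (-q) (q ^ 3) * jTheta q (-(q ^ 3)) * qPochInf (q ^ 12) (q ^ 12) =
      jTheta (q ^ 2) (q ^ 12) * jTheta (-(q ^ 4)) (q ^ 6) ^ 2 * qPochInf (q ^ 6) (q ^ 12) := by
    simpa [← pow_mul, ← pow_succ] using jTheta_neg_mul_jTheta_neg_base (x := q)
      (norm_pow_lt_one hq1 three_ne_zero) (pow_ne_zero 3 hq)
  have hsymm : jTheta (-(q ^ 4)) (q ^ 6) = jTheta (-(q ^ 2)) (q ^ 6) := by
    rw [← jTheta_div_left (pow_ne_zero 6 hq)]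
    congr 1
    field_simp
  have hmod3 : jTheta (q ^ 2) (q ^ 12) * jTheta (-(q ^ 2)) (q ^ 6) =
      qPochInf (q ^ 6) (q ^ 12) * qPochInf (q ^ 12) (q ^ 12) ^ 2 := by
    simpa [← pow_mul] using
      jTheta_mul_jTheta_neg_pow_three (norm_pow_lt_one hq1 two_ne_zero) (pow_ne_zero 2 hq)
  have hRHS :
      jTheta (q ^ 6) (q ^ 12) = qPochInf (q ^ 6) (q ^ 12) ^ 2 * qPochInf (q ^ 12) (q ^ 12) := by
    rw [jTheta, show q ^ 12 / q ^ 6 = q ^ 6 by field_simp]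
    ring
  have h12 := norm_pow_lt_one hq1 (n := 12) (by norm_num)
  refine mul_right_cancel₀ (qPochInf_ne_zero h12 h12) ?_
  rw [hLHS, hsymm, hRHS]
  linear_combination jTheta (-(q ^ 2)) (q ^ 6) * qPochInf (q ^ 6) (q ^ 12) * hmod3
end
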